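/- Let w(φ) = cos φ + sin φ/√3, β = 10^{−4.1}, ε = 10^{−3.9}. Then min{ 1.5002 / ((1−ε)·w(β) + ε·w(π/6)), √3 / (ε·w(π/6 − β) + (1−ε)·w(π/6)) } ≥ 1.5 + 5·10^{−13}. -/

import Mathlib

/-!
Writing `w φ = (2 / √3) cos (φ - π / 6)`, the second denominator is `(2 / √3) (1 - δ)` with
`δ = ε (1 - cos β) ≈ ε β² / 2`, so the second quotient is `(3 / 2) / (1 - δ) ≥ 3 / 2 + (3 / 2) δ`.
Since `ε β = 10⁻⁸` exactly, `δ ≈ 10⁻⁸ β / 2 ≈ 4 · 10⁻¹³`, which beats the required `5 · 10⁻¹³`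
after the factor `3 / 2`. The first quotient is comfortably larger: its denominator is at most
`1 + β / √3 + ε (2 / √3 - 1) < 1.0001`.
-/

open Real

noncomputable def w (φ : ℝ) : ℝ := Real.cos φ + Real.sin φ / Real.sqrt 3

lemma w_eq_mul_cos_sub (φ : ℝ) : w φ = 2 / √3 * cos (φ - π / 6) := by
  rw [w, cos_sub, cos_pi_div_six, sin_pi_div_six]
  field_simp

lemma w_pi_div_six_sub (x : ℝ) : w (π / 6 - x) = 2 / √3 * cos x := by
  rw [w_eq_mul_cos_sub, sub_sub_cancel_left, cos_neg]

lemma w_pi_div_six : w (π / 6) = 2 / √3 := by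
  simpa using w_pi_div_six_sub 0

lemma w_pos {φ : ℝ} (h₁ : -(π / 3) < φ) (h₂ : φ < 2 * π / 3) : 0 < w φ := by
  rw [w_eq_mul_cos_sub]
  exact mul_pos (by positivity) (cos_pos_of_mem_Ioo ⟨by linarith, by linarith⟩)

lemma w_le_one_add {x : ℝ} (hx : 0 ≤ x) : w x ≤ 1 + x / √3 := by
  rw [w]
  gcongr
  · exact cos_le_one x
  · exact sin_le hx

lemma le_rpow_of_pow_le {a b y : ℝ} {n : ℕ} (hn : n ≠ 0) (hb : 0 ≤ b)
    (h : a ^ n ≤ b ^ (y * n)) : a ≤ b ^ y :=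
  le_of_pow_le_pow_left₀ hn (rpow_nonneg hb y) (by rwa [rpow_mul_natCast hb] at h)

lemma sq_div_two_sub_le_one_sub_cos {x : ℝ} (hx : |x| ≤ 1) :
    x ^ 2 / 2 - 5 / 96 * x ^ 4 ≤ 1 - cos x := by
  have h := (abs_le.1 (cos_bound hx)).2
  rw [Even.pow_abs ⟨2, rfl⟩] at h
  linarith

lemma le_first_quotient {β ε : ℝ} (hβ₀ : 0 ≤ β) (hβ : β ≤ 1e-4) (hε₀ : 0 ≤ ε)
    (hε : ε ≤ 1.3e-4) :
    1.5 + 5e-13 ≤ 1.5002 / ((1 - ε) * w β + ε * w (π / 6)) := by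
  have hs : 1.732 ≤ √3 := le_sqrt_of_sq_le (by norm_num)
  have hwβ_pos : 0 < w β := w_pos (by linarith [pi_pos]) (by linarith [pi_gt_three])
  have hwβ : w β ≤ 1 + 1e-4 / 1.732 :=
    (w_le_one_add hβ₀).trans (by gcongr)
  have hw6 : w (π / 6) ≤ 2 / 1.732 := by rw [w_pi_div_six]; gcongr
  have hden_pos : 0 < (1 - ε) * w β + ε * w (π / 6) := by
    have hw6_pos : 0 < w (π / 6) := w_pos (by linarith [pi_pos]) (by linarith [pi_pos])
    have hε₁ : 0 < 1 - ε := by linarith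
    positivity
  have hden : (1 - ε) * w β + ε * w (π / 6) ≤ 1.0001 := by nlinarith
  rw [le_div_iff₀ hden_pos]
  nlinarith

lemma le_second_quotient {β ε : ℝ} (hβ : 7.9e-5 ≤ β) (hβ₁ : β ≤ 1) (hε₀ : 0 ≤ ε) (hε₁ : ε ≤ 1)
    (hεβ : ε * β = 1e-8) :
    1.5 + 5e-13 ≤ √3 / (ε * w (π / 6 - β) + (1 - ε) * w (π / 6)) := by
  set δ := ε * (1 - cos β) with hδ_def
  have hquot : √3 / (ε * w (π / 6 - β) + (1 - ε) * w (π / 6)) = 3 / 2 / (1 - δ) := by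
    have h3 : (√3) ^ 2 = 3 := sq_sqrt (by norm_num)
    rw [w_pi_div_six_sub, w_pi_div_six, hδ_def]
    field_simp
    rw [h3]
    ring
  have hδ_lower : 3.5e-13 ≤ δ := by
    have hcos := sq_div_two_sub_le_one_sub_cos (abs_le.2 ⟨by linarith, hβ₁⟩)
    calc (3.5e-13 : ℝ) ≤ ε * β * (β / 2 - 5 / 96 * β ^ 3) := by rw [hεβ]; nlinarith
      _ ≤ δ := by nlinarith
  have hδ_upper : δ ≤ 1 / 2 := by
    have hcos := one_sub_sq_div_two_le_cos (x := β)
    nlinarith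
  rw [hquot, le_div_iff₀ (by linarith)]
  nlinarith

theorem final_numeric_bound (β ε : ℝ)
    (hβ : β = (10:ℝ) ^ (-4.1 : ℝ)) (hε : ε = (10:ℝ) ^ (-3.9 : ℝ)) :
    1.5 + 5 * (10:ℝ) ^ (-13 : ℝ) ≤
      min (1.5002 / ((1 - ε) * w β + ε * w (π/6)))
          (Real.sqrt 3 / (ε * w (π/6 - β) + (1 - ε) * w (π/6))) := by
  have hβ_lower : 7.9e-5 ≤ β := hβ ▸ le_rpow_of_pow_le (n := 10) (by norm_num) (by norm_num)
    (by norm_num)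
  have hβ_upper : β ≤ 1e-4 := hβ ▸ (rpow_le_rpow_of_exponent_le (by norm_num)
    (by norm_num : (-4.1 : ℝ) ≤ -4)).trans_eq (by norm_num)
  have hεβ : ε * β = 1e-8 := by rw [hε, hβ, ← rpow_add (by norm_num)]; norm_num
  have hε_pos : 0 < ε := hε ▸ rpow_pos_of_pos (by norm_num) _
  have hε_upper : ε ≤ 1.3e-4 := by nlinarith
  rw [show 5 * (10:ℝ) ^ (-13 : ℝ) = 5e-13 by norm_num]
  exact le_min (le_first_quotient (by linarith) hβ_upper hε_pos.le hε_upper)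
    (le_second_quotient hβ_lower (by linarith) hε_pos.le (by linarith) hεβ)
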